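/- arXiv:2112.12681 — 8 statements merged into one kernel-verified Lean document; each statement's English description precedes it below -/
import Mathlib

section
/- Let V be a commutative unital quantale. For every fully faithful V-functor i : (A,a) → (X,b) (i.e. a(z,z') = b(i z, i z') for all z,z' ∈ A) and every V-functor φ : (A,a) → (V,hom), there exists a V-functor ψ : (X,b) → (V,hom) such that ψ ∘ i = φ. In other words, the V-category (V,hom) is injective in V-Cat with respect to fully faithful V-functors. -/
/-!
Common framework: commutative unital quantales, `V`-relations, lax extensions,
predicate liftings, Moss liftings and the Kantorovich extension.
-/

universe u

namespace Paper

variable {V : Type u} [CommMonoid V] [CompleteLattice V]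

/-- A `V`-relation `X ⇸ Y` is a map `X → Y → V`. -/
abbrev VRel (V : Type u) (X Y : Type u) : Type u := X → Y → V

/-- Composition of `V`-relations: `(s · r)(x,z) = ⨆ y, r x y ⊗ s y z`. -/
def vcomp {X Y Z : Type u} (s : VRel V Y Z) (r : VRel V X Y) : VRel V X Z :=
  fun x z => ⨆ y, r x y * s y z

/-- The internal hom of the quantale: `hom u w = ⨆ {v | u ⊗ v ≤ w}`. -/
def qhom (u w : V) : V := sSup {v | u * v ≤ w}

/-- The lift `s ⊸ r` of `r : X ⇸ Z` along `s : Y ⇸ Z`. -/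
def vlift {X Y Z : Type u} (s : VRel V Y Z) (r : VRel V X Z) : VRel V X Y :=
  fun x y => ⨅ z, qhom (s y z) (r x z)

/-- The extension `r ⟜ s` of `r : Y ⇸ Z` along `s : Y ⇸ X`. -/
def vext {X Y Z : Type u} (r : VRel V Y Z) (s : VRel V Y X) : VRel V X Z :=
  fun x z => ⨅ y, qhom (s y x) (r y z)

/-- Converse of a `V`-relation. -/
def vconv {X Y : Type u} (r : VRel V X Y) : VRel V Y X := fun y x => r x y

/-- A function `f : X → Y` viewed as a `V`-relation `f_∘ : X ⇸ Y`. -/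
def graph {X Y : Type u} (f : X → Y) : VRel V X Y :=
  fun x y => ⨆ _ : f x = y, (1 : V)

/-- The identity `V`-relation `1_X : X ⇸ X`. -/
def idRel (V : Type u) [CommMonoid V] [CompleteLattice V] (X : Type u) : VRel V X X :=
  fun x y => ⨆ _ : x = y, (1 : V)

/-- The `V`-category structure `[r,s]` on `V`-relations `X ⇸ Y`. -/
def brkt {X Y : Type u} (r s : VRel V X Y) : V :=
  ⨅ (x : X), ⨅ (y : Y), qhom (r x y) (s x y)

/-- A lax extension of a `Set`-functor `F` to `V`-relations. -/
structure LaxExt (V : Type u) [CommMonoid V] [CompleteLattice V]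
    (F : Type u → Type u) [Functor F] where
  ext : ∀ {X Y : Type u}, VRel V X Y → VRel V (F X) (F Y)
  mono : ∀ {X Y : Type u} {r r' : VRel V X Y}, r ≤ r' → ext r ≤ ext r'
  lax_comp : ∀ {X Y Z : Type u} (r : VRel V X Y) (s : VRel V Y Z),
    vcomp (ext s) (ext r) ≤ ext (vcomp s r)
  map_le : ∀ {X Y : Type u} (f : X → Y),
    graph (Functor.map f : F X → F Y) ≤ ext (graph f)
  map_conv_le : ∀ {X Y : Type u} (f : X → Y),
    vconv (graph (Functor.map f : F X → F Y)) ≤ ext (vconv (graph f))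

/-- A `V`-enriched lax extension. -/
def LaxExt.Enriched {F : Type u → Type u} [Functor F] (E : LaxExt V F) : Prop :=
  ∀ (X Y : Type u) (r r' : VRel V X Y), brkt r r' ≤ brkt (E.ext r) (E.ext r')

/-- A `κ`-ary predicate lifting of `F`, viewed relationally: it sends a
`V`-relation `f : X ⇸ κ` naturally to a `V`-relation `μ f : F X ⇸ 1`. -/
structure PredLift (V : Type u) [CommMonoid V] [CompleteLattice V]
    (F : Type u → Type u) [Functor F] (κ : Type u) where
  app : ∀ {X : Type u}, VRel V X κ → VRel V (F X) PUnit
  natural : ∀ {X Y : Type u} (h : X → Y) (g : VRel V Y κ),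
    app (vcomp g (graph h)) = vcomp (app g) (graph (Functor.map h : F X → F Y))

/-- Monotonicity of a predicate lifting. -/
def PredLift.Monotone {F : Type u → Type u} [Functor F] {κ : Type u}
    (μ : PredLift V F κ) : Prop :=
  ∀ {X : Type u} {f f' : VRel V X κ}, f ≤ f' → μ.app f ≤ μ.app f'

/-- `V`-enrichment of a predicate lifting. -/
def PredLift.Enriched {F : Type u → Type u} [Functor F] {κ : Type u}
    (μ : PredLift V F κ) : Prop :=
  ∀ (X : Type u) (f f' : VRel V X κ), brkt f f' ≤ brkt (μ.app f) (μ.app f')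

/-- A predicate lifting is induced by a lax extension `E` if `μ f = 𝔯 · E f`
for some `𝔯 : F κ ⇸ 1`. -/
def PredLift.InducedBy {F : Type u → Type u} [Functor F] {κ : Type u}
    (μ : PredLift V F κ) (E : LaxExt V F) : Prop :=
  ∃ rr : VRel V (F κ) PUnit, ∀ (X : Type u) (f : VRel V X κ),
    μ.app f = vcomp rr (E.ext f)

/-- The (underlying assignment of the) Moss lifting `μ^𝔨` of a lax extension,
determined by an element `𝔨 ∈ F κ`: `μ^𝔨 f = (𝔨_∘)° · E f`. -/
def mossApp {F : Type u → Type u} [Functor F] (E : LaxExt V F) {κ : Type u}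
    (k : F κ) (X : Type u) (f : VRel V X κ) : VRel V (F X) PUnit :=
  vcomp (vconv (graph (fun _ : PUnit => k))) (E.ext f)

/-- The Kantorovich extension of a `κ`-ary predicate-lifting assignment. -/
def kant {F : Type u → Type u} [Functor F] {κ : Type u}
    (μ : ∀ (X : Type u), VRel V X κ → VRel V (F X) PUnit)
    {X Y : Type u} (r : VRel V X Y) : VRel V (F X) (F Y) :=
  ⨅ g : VRel V Y κ, vlift (μ Y g) (μ X (vcomp g r))

/-- The Kantorovich extension of a predicate lifting. -/
def PredLift.kant {F : Type u → Type u} [Functor F] {κ : Type u}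
    (μ : PredLift V F κ) {X Y : Type u} (r : VRel V X Y) : VRel V (F X) (F Y) :=
  Paper.kant (fun _ g => μ.app g) r

/-- The evaluation `V`-relation `ev_κ : V^κ ⇸ κ`. -/
def evRel (V : Type u) [CommMonoid V] [CompleteLattice V] (κ : Type u) :
    VRel V (κ → V) κ :=
  fun φ i => φ i

end Paper


private theorem le_qhom_iff {V : Type u} [CommMonoid V] [CompleteLattice V] [IsQuantale V]
    {u v w : V} : v ≤ Paper.qhom u w ↔ u * v ≤ w := by
  constructor
  · intro h
    calc u * v ≤ u * Paper.qhom u w := mul_le_mul_right h u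
      _ = ⨆ y ∈ {v | u * v ≤ w}, u * y := mul_sSup_distrib
      _ ≤ w := by apply iSup₂_le; intro y hy; exact hy
  · intro h; exact le_sSup h

open Paper in
/-- For a commutative unital quantale `V`, the `V`-category
`(V, hom)` is injective in `V`-Cat with respect to fully faithful `V`-functors:
every `V`-functor `φ : (A,a) → (V,hom)` extends along any fully faithful
`V`-functor `i : (A,a) → (X,b)`. -/
theorem vcat_hom_injective {V : Type u} [CommMonoid V] [CompleteLattice V] [IsQuantale V]
    {A X : Type u} (a : A → A → V) (b : X → X → V)
    (ha_refl : ∀ z, (1 : V) ≤ a z z)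
    (ha_trans : ∀ z₁ z₂ z₃, a z₁ z₂ * a z₂ z₃ ≤ a z₁ z₃)
    (hb_refl : ∀ x, (1 : V) ≤ b x x)
    (hb_trans : ∀ x₁ x₂ x₃, b x₁ x₂ * b x₂ x₃ ≤ b x₁ x₃)
    (i : A → X) (hff : ∀ z z', a z z' = b (i z) (i z'))
    (φ : A → V) (hφ : ∀ z z', a z z' ≤ qhom (φ z) (φ z')) :
    ∃ ψ : X → V, (∀ x x', b x x' ≤ qhom (ψ x) (ψ x')) ∧ ∀ z, ψ (i z) = φ z := by
  refine ⟨fun x => ⨆ z, φ z * b (i z) x, ?_, ?_⟩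
  · intro x x'
    rw [le_qhom_iff, Quantale.iSup_mul_distrib]
    apply iSup_le; intro z
    refine le_trans ?_ (le_iSup _ z)
    rw [mul_assoc]
    exact mul_le_mul_right (hb_trans _ _ _) _
  · intro z
    apply le_antisymm
    · apply iSup_le; intro z'
      rw [← hff]
      exact le_qhom_iff.mp (hφ z' z)
    · calc φ z = φ z * 1 := (mul_one _).symm
        _ ≤ φ z * b (i z) (i z) := mul_le_mul_right (hb_refl _) _
        _ ≤ _ := le_iSup (fun z' => φ z' * b (i z') (i z)) z
end

section
/- Let V be a commutative unital quantale and F̂ a lax extension of a functor F : Set → Set. The following are equivalent: (i) F̂ is V-enriched, i.e. [r,r'] ≤ [F̂r, F̂r'] for all V-relations r, r' : X ⇸ Y; (ii) for every set X and every u ∈ V, u ≤ [1_{FX}, F̂(u ⊗ 1_X)]; (iii) for every set X and every u ∈ V, u ⊗ 1_{FX} ≤ F̂(u ⊗ 1_X); (iv) for every V-relation r : X ⇸ Y and every u ∈ V, u ⊗ F̂r ≤ F̂(u ⊗ r). -/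
/-!
Common framework: commutative unital quantales, `V`-relations, lax extensions,
predicate liftings, Moss liftings and the Kantorovich extension.
-/

universe u

section Aux
open Paper
variable {V : Type u} [CommMonoid V] [CompleteLattice V] [IsQuantale V]

lemma qhom_adj {u v w : V} : v ≤ Paper.qhom u w ↔ u * v ≤ w :=
  Quantale.rightMulResiduation_le_iff_mul_le

lemma le_qhom {u v w : V} (h : u * v ≤ w) : v ≤ Paper.qhom u w := qhom_adj.mpr h

lemma idRel_self {X : Type u} (x : X) : idRel V X x x = 1 := by
  simp [Paper.idRel]

lemma idRel_ne {X : Type u} {x y : X} (h : x ≠ y) : idRel V X x y = ⊥ := by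
  simp [Paper.idRel, h]

lemma mul_bot' (u : V) : u * (⊥ : V) = ⊥ := by
  have : u * sSup (∅ : Set V) = ⨆ y ∈ (∅ : Set V), u * y := IsQuantale.mul_sSup_distrib _ _
  simpa using this

lemma bot_mul' (u : V) : (⊥ : V) * u = ⊥ := by
  rw [mul_comm]; exact mul_bot' u

lemma vcomp_id_left {X Y : Type u} (r : VRel V X Y) (u : V) :
    vcomp r (fun x y => u * idRel V X x y) = fun x y => u * r x y := by
  funext x z
  apply le_antisymm
  · apply iSup_le; intro y
    by_cases h : x = y
    · subst h; simp [idRel_self, mul_one]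
    · simp [idRel_ne h, mul_bot', bot_mul']
  · refine le_trans ?_ (le_iSup _ x)
    simp [idRel_self, mul_one]

end Aux

open Paper in
/-- Characterisations of `V`-enriched lax extensions. -/
theorem enriched_tfae {V : Type u} [CommMonoid V] [CompleteLattice V] [IsQuantale V]
    {F : Type u → Type u} [Functor F] [LawfulFunctor F] (E : LaxExt V F) :
    List.TFAE
      [ E.Enriched,
        ∀ (X : Type u) (u : V),
          u ≤ brkt (idRel V (F X)) (E.ext (fun x y => u * idRel V X x y)),
        ∀ (X : Type u) (u : V),
          (fun a b => u * idRel V (F X) a b) ≤ E.ext (fun x y => u * idRel V X x y),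
        ∀ (X Y : Type u) (r : VRel V X Y) (u : V),
          (fun a b => u * E.ext r a b) ≤ E.ext (fun x y => u * r x y) ] := by
  tfae_have 1 → 2 := by
    intro h X u
    have hid : idRel V (F X) ≤ E.ext (idRel V X) := by
      have := E.map_le (id : X → X)
      have hg : graph (Functor.map (id : X → X) : F X → F X) = idRel V (F X) := by
        funext a b; simp [graph, Paper.idRel, id_map']
      have hg2 : (graph (id : X → X) : VRel V X X) = idRel V X := by
        funext a b; simp [graph, Paper.idRel]
      rw [hg, hg2] at this; exact this
    have h1 : u ≤ brkt (idRel V X) (fun x y => u * idRel V X x y) := by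
      refine le_iInf fun x => le_iInf fun y => le_qhom ?_
      by_cases hxy : x = y
      · subst hxy; simp [idRel_self, mul_comm]
      · simp [idRel_ne hxy, bot_mul']
    refine le_trans (le_trans h1 (h X X _ _)) ?_
    refine le_iInf fun a => le_iInf fun b => ?_
    refine le_trans (iInf_le _ a) (le_trans (iInf_le _ b) ?_)
    exact qhom_adj.mpr (le_trans (mul_le_mul_left (hid a b) _) (qhom_adj.mp le_rfl))
  tfae_have 2 → 3 := by
    intro h X u a b
    by_cases hab : a = b
    · subst hab
      have := le_trans (le_trans (h X u) (iInf_le _ a)) (iInf_le _ a)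
      rw [idRel_self] at this
      have := qhom_adj.mp this
      rw [one_mul] at this
      simpa [idRel_self, mul_one] using this
    · simp [idRel_ne hab, mul_bot']
  tfae_have 3 → 4 := by
    intro h X Y r u a b
    have step1 : u * E.ext r a b ≤ vcomp (E.ext r) (E.ext (fun x y => u * idRel V X x y)) a b := by
      refine le_trans ?_ (le_iSup _ a)
      exact mul_le_mul_left (by simpa [idRel_self, mul_one] using h X u a a) _
    refine le_trans step1 (le_trans (E.lax_comp _ _ a b) ?_)
    rw [vcomp_id_left r u]
  tfae_have 4 → 1 := by
    intro h X Y r r'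
    set u := brkt r r' with hu
    have hur : (fun x y => u * r x y) ≤ r' := by
      intro x y
      have : u ≤ qhom (r x y) (r' x y) := le_trans (iInf_le _ x) (iInf_le _ y)
      exact le_trans (le_of_eq (mul_comm u (r x y))) (qhom_adj.mp this)
    refine le_iInf fun a => le_iInf fun b => le_qhom ?_
    calc E.ext r a b * u = u * E.ext r a b := mul_comm _ _
      _ ≤ E.ext (fun x y => u * r x y) a b := h X Y r u a b
      _ ≤ E.ext r' a b := E.mono hur a b
  tfae_finish
end

section
/- Let V be a commutative unital quantale and F̂ a lax extension of F : Set → Set. Then every predicate lifting induced by F̂ is monotone. Moreover, if F̂ is V-enriched, then every Moss lifting μ^𝔨 of F̂ is V-enriched, i.e. [f, f'] ≤ [μ^𝔨(f), μ^𝔨(f')] for all V-relations f, f' : X ⇸ κ. -/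
/-!
Common framework: commutative unital quantales, `V`-relations, lax extensions,
predicate liftings, Moss liftings and the Kantorovich extension.
-/

universe u

section Aux
open Paper
variable {V : Type u} [CommMonoid V] [CompleteLattice V] [IsQuantale V]

lemma qhom_le_iff {u w v : V} : v ≤ qhom u w ↔ u * v ≤ w := by
  constructor
  · intro h
    calc u * v ≤ u * qhom u w := mul_le_mul_right h u
    _ = ⨆ a ∈ {a : V | u * a ≤ w}, u * a := mul_sSup_distrib
    _ ≤ w := by simp only [iSup_le_iff, Set.mem_setOf_eq]; exact fun a ha => ha
  · intro h; exact le_sSup h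

lemma vcomp_mono_right {X Y Z : Type u} (c : VRel V Y Z) {r r' : VRel V X Y}
    (h : r ≤ r') : vcomp c r ≤ vcomp c r' :=
  fun x z => iSup_mono fun y => mul_le_mul_left (h x y) _

lemma brkt_vcomp {X Y Z : Type u} (c : VRel V Y Z) (r r' : VRel V X Y) :
    brkt r r' ≤ brkt (vcomp c r) (vcomp c r') := by
  refine le_iInf fun x => le_iInf fun z => qhom_le_iff.mpr ?_
  rw [vcomp, mul_comm, Quantale.mul_iSup_distrib]
  refine iSup_le fun y => ?_
  refine le_trans ?_ (le_iSup (fun y => r' x y * c y z) y)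
  have h1 : r x y * brkt r r' ≤ r' x y := by
    rw [← qhom_le_iff]
    exact le_trans (iInf_le _ x) (iInf_le _ y)
  calc brkt r r' * (r x y * c y z) = (r x y * brkt r r') * c y z := by rw [← mul_assoc, mul_comm (brkt r r')]
  _ ≤ r' x y * c y z := mul_le_mul_left h1 _

end Aux

open Paper in
/-- Every predicate lifting induced by a lax extension is
monotone; if the lax extension is `V`-enriched, then every Moss lifting of it
is `V`-enriched. -/
theorem induced_monotone_and_moss_enriched {V : Type u} [CommMonoid V] [CompleteLattice V]
    [IsQuantale V] {F : Type u → Type u} [Functor F] [LawfulFunctor F]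
    (E : LaxExt V F) {κ : Type u} :
    (∀ μ : PredLift V F κ, μ.InducedBy E → μ.Monotone) ∧
    (E.Enriched → ∀ (k : F κ) (X : Type u) (f f' : VRel V X κ),
      brkt f f' ≤ brkt (mossApp E k X f) (mossApp E k X f')) := by
  constructor
  · rintro μ ⟨rr, hrr⟩ X f f' hff
    rw [hrr, hrr]
    exact vcomp_mono_right rr (E.mono hff)
  · intro hE k X f f'
    exact le_trans (hE X κ f f') (brkt_vcomp _ _ _)
end

section
/- Let V be a commutative unital quantale, F̂ a lax extension of F : Set → Set, and μ a κ-ary predicate lifting of F. The following are equivalent: (i) μ is induced by F̂; (ii) μ(ev_κ) = 𝔯 · F̂(ev_κ) for some V-relation 𝔯 : Fκ ⇸ 1; (iii) μ(ev_κ) = μ(1_κ) · F̂(ev_κ); (iv) μ(ev_κ) = (μ(ev_κ) ⟜ F̂(ev_κ)) · F̂(ev_κ). -/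
/-!
Common framework: commutative unital quantales, `V`-relations, lax extensions,
predicate liftings, Moss liftings and the Kantorovich extension.
-/

universe u

namespace Paper

variable {V : Type u} [CommMonoid V] [CompleteLattice V]

section Aux

variable {V : Type u} [CommMonoid V] [CompleteLattice V] [IsQuantale V]

lemma mul_iSup' {ι : Sort*} (a : V) (f : ι → V) : a * (⨆ i, f i) = ⨆ i, a * f i := by
  rw [iSup, mul_sSup_distrib, iSup_range]

lemma iSup_mul' {ι : Sort*} (a : V) (f : ι → V) : (⨆ i, f i) * a = ⨆ i, f i * a := by
  rw [iSup, sSup_mul_distrib, iSup_range]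

lemma vcomp_mono {X Y Z : Type u} {r r' : VRel V X Y} {s s' : VRel V Y Z}
    (hr : r ≤ r') (hs : s ≤ s') : vcomp s r ≤ vcomp s' r' := by
  intro x z
  exact iSup_mono fun y => mul_le_mul' (hr x y) (hs y z)

lemma vcomp_assoc {W X Y Z : Type u} (t : VRel V Y Z) (s : VRel V X Y) (r : VRel V W X) :
    vcomp t (vcomp s r) = vcomp (vcomp t s) r := by
  funext w z
  simp only [vcomp, iSup_mul', mul_iSup', mul_assoc]
  exact iSup_comm

lemma vcomp_graph {X Y Z : Type u} (r : VRel V Y Z) (h : X → Y) :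
    vcomp r (graph h) = fun x z => r (h x) z := by
  funext x z
  simp only [vcomp, graph, iSup_mul', one_mul]
  exact le_antisymm (iSup_le fun y => iSup_le fun hy => hy ▸ le_rfl)
    (le_iSup_of_le (h x) (le_iSup_of_le rfl le_rfl))

lemma graph_id {X : Type u} : graph (id : X → X) = idRel V X := rfl

lemma vcomp_idRel {X Y : Type u} (r : VRel V X Y) : vcomp r (idRel V X) = r := by
  rw [← graph_id, vcomp_graph]; rfl

lemma idRel_vcomp {X Y : Type u} (r : VRel V X Y) : vcomp (idRel V Y) r = r := by
  funext x y
  simp only [vcomp, idRel, mul_iSup', mul_one]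
  exact le_antisymm (iSup_le fun y' => iSup_le fun hy => hy ▸ le_rfl)
    (le_iSup_of_le y (le_iSup_of_le rfl le_rfl))

lemma transpose {X κ : Type u} (f : VRel V X κ) :
    vcomp (evRel V κ) (graph (fun x (i : κ) => f x i)) = f := by
  rw [vcomp_graph]; rfl

lemma le_qhom {u v w : V} (h : u * v ≤ w) : v ≤ qhom u w := le_sSup h

lemma mul_qhom_le (u w : V) : u * qhom u w ≤ w := by
  rw [qhom, mul_sSup_distrib]
  exact iSup_le fun v => iSup_le fun hv => hv

lemma vcomp_vext_le {X Y Z : Type u} (r : VRel V Y Z) (s : VRel V Y X) :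
    vcomp (vext r s) s ≤ r := by
  intro y z
  refine iSup_le fun x => ?_
  calc s y x * vext r s x z ≤ s y x * qhom (s y x) (r y z) :=
        mul_le_mul' le_rfl (iInf_le _ y)
    _ ≤ r y z := mul_qhom_le _ _

lemma le_vext {X Y Z : Type u} {r : VRel V Y Z} {s : VRel V Y X} {t : VRel V X Z}
    (h : vcomp t s ≤ r) : t ≤ vext r s := by
  intro x z
  refine le_iInf fun y => le_qhom ?_
  exact le_trans (le_iSup (fun x' => s y x' * t x' z) x) (h y z)

lemma idRel_le_conv_comp {X Y : Type u} (g : X → Y) :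
    idRel V X ≤ vcomp (vconv (graph g)) (graph g) := by
  intro a a'
  refine iSup_le fun h => ?_
  subst h
  refine le_iSup_of_le (g a) ?_
  simp [graph, vconv]

lemma comp_graph_conv_le {X Y Z : Type u} (r : VRel V Y Z) (h : X → Y) :
    vcomp (vcomp r (graph h)) (vconv (graph h)) ≤ r := by
  rw [vcomp_graph]
  intro y z
  refine iSup_le fun x => ?_
  simp only [vconv, graph, iSup_mul', one_mul]
  exact iSup_le fun hy => hy ▸ le_rfl

/-- Lax extensions commute with composition by graphs of functions. -/
lemma ext_vcomp_graph {F : Type u → Type u} [Functor F] (E : LaxExt V F)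
    {X Y Z : Type u} (r : VRel V Y Z) (h : X → Y) :
    E.ext (vcomp r (graph h)) = vcomp (E.ext r) (graph (Functor.map h : F X → F Y)) := by
  refine le_antisymm ?_ ?_
  · set g : F X → F Y := Functor.map h with hg
    calc E.ext (vcomp r (graph h))
        = vcomp (E.ext (vcomp r (graph h))) (idRel V (F X)) := (vcomp_idRel _).symm
      _ ≤ vcomp (E.ext (vcomp r (graph h))) (vcomp (vconv (graph g)) (graph g)) :=
          vcomp_mono (idRel_le_conv_comp g) le_rfl
      _ = vcomp (vcomp (E.ext (vcomp r (graph h))) (vconv (graph g))) (graph g) :=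
          vcomp_assoc _ _ _
      _ ≤ vcomp (E.ext r) (graph g) := vcomp_mono le_rfl ?_
    calc vcomp (E.ext (vcomp r (graph h))) (vconv (graph g))
        ≤ vcomp (E.ext (vcomp r (graph h))) (E.ext (vconv (graph h))) :=
          vcomp_mono (E.map_conv_le h) le_rfl
      _ ≤ E.ext (vcomp (vcomp r (graph h)) (vconv (graph h))) := E.lax_comp _ _
      _ ≤ E.ext r := E.mono (comp_graph_conv_le r h)
  · calc vcomp (E.ext r) (graph (Functor.map h : F X → F Y))
        ≤ vcomp (E.ext r) (E.ext (graph h)) := vcomp_mono (E.map_le h) le_rfl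
      _ ≤ E.ext (vcomp r (graph h)) := E.lax_comp _ _

lemma idRel_le_ext {F : Type u → Type u} [Functor F] [LawfulFunctor F] (E : LaxExt V F)
    (X : Type u) : idRel V (F X) ≤ E.ext (idRel V X) := by
  have h := E.map_le (id : X → X)
  rw [graph_id] at h
  have : graph (Functor.map (id : X → X) : F X → F X) = idRel V (F X) := by
    rw [show (Functor.map (id : X → X) : F X → F X) = id from funext fun a => id_map a,
      graph_id]
  rwa [this] at h

end Aux

end Paper

open Paper in
/-- Characterisations of the predicate liftings induced by a
lax extension, in terms of the evaluation relation. -/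
theorem induced_tfae {V : Type u} [CommMonoid V] [CompleteLattice V] [IsQuantale V]
    {F : Type u → Type u} [Functor F] [LawfulFunctor F]
    (E : LaxExt V F) {κ : Type u} (μ : PredLift V F κ) :
    List.TFAE
      [ μ.InducedBy E,
        ∃ rr : VRel V (F κ) PUnit,
          μ.app (evRel V κ) = vcomp rr (E.ext (evRel V κ)),
        μ.app (evRel V κ) = vcomp (μ.app (idRel V κ)) (E.ext (evRel V κ)),
        μ.app (evRel V κ) =
          vcomp (vext (μ.app (evRel V κ)) (E.ext (evRel V κ))) (E.ext (evRel V κ)) ] := by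
  have key : ∀ rr : VRel V (F κ) PUnit,
      μ.app (evRel V κ) = vcomp rr (E.ext (evRel V κ)) →
      ∀ (X : Type u) (f : VRel V X κ), μ.app f = vcomp rr (E.ext f) := by
    intro rr hrr X f
    have hf := transpose (V := V) f
    calc μ.app f = μ.app (vcomp (evRel V κ) (graph fun x i => f x i)) := by rw [hf]
      _ = vcomp (μ.app (evRel V κ)) (graph (Functor.map (fun x i => f x i))) :=
          μ.natural _ _
      _ = vcomp (vcomp rr (E.ext (evRel V κ))) (graph (Functor.map (fun x i => f x i))) := by
          rw [hrr]
      _ = vcomp rr (vcomp (E.ext (evRel V κ)) (graph (Functor.map (fun x i => f x i)))) :=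
          (vcomp_assoc _ _ _).symm
      _ = vcomp rr (E.ext (vcomp (evRel V κ) (graph fun x i => f x i))) := by
          rw [ext_vcomp_graph]
      _ = vcomp rr (E.ext f) := by rw [hf]
  tfae_have 1 → 2 := by
    rintro ⟨rr, h⟩
    exact ⟨rr, h _ _⟩
  tfae_have 2 → 1 := by
    rintro ⟨rr, h⟩
    exact ⟨rr, key rr h⟩
  tfae_have 2 → 3 := by
    rintro ⟨rr, h⟩
    have h1 : μ.app (idRel V κ) = vcomp rr (E.ext (idRel V κ)) := key rr h _ _
    have h2 : vcomp (E.ext (idRel V κ)) (E.ext (evRel V κ)) = E.ext (evRel V κ) := by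
      refine le_antisymm ?_ ?_
      · have := E.lax_comp (evRel V κ) (idRel V κ)
        rwa [idRel_vcomp] at this
      · have := vcomp_mono (le_refl (E.ext (evRel V κ))) (idRel_le_ext E κ)
        rwa [idRel_vcomp] at this
    rw [h1, ← vcomp_assoc, h2, h]
  tfae_have 3 → 2 := fun h => ⟨μ.app (idRel V κ), h⟩
  tfae_have 2 → 4 := by
    rintro ⟨rr, h⟩
    refine le_antisymm ?_ (vcomp_vext_le _ _)
    calc μ.app (evRel V κ) = vcomp rr (E.ext (evRel V κ)) := h
      _ ≤ vcomp (vext (μ.app (evRel V κ)) (E.ext (evRel V κ))) (E.ext (evRel V κ)) :=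
          vcomp_mono le_rfl (le_vext (le_of_eq h.symm))
  tfae_have 4 → 2 := fun h => ⟨vext (μ.app (evRel V κ)) (E.ext (evRel V κ)), h⟩
  tfae_finish
end

section
/- Let V be a commutative unital quantale, F̂ a lax extension of F : Set → Set, and μ a κ-ary predicate lifting of F induced by F̂. Then F̂ ≤ F̂^μ, i.e. F̂r ≤ F̂^μ r for every V-relation r : X ⇸ Y, where F̂^μ is the Kantorovich extension of μ. -/
/-!
Common framework: commutative unital quantales, `V`-relations, lax extensions,
predicate liftings, Moss liftings and the Kantorovich extension.
-/

universe u

open Paper in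
/-- If a predicate lifting `μ` is induced by a lax extension
`F̂`, then `F̂ ≤ F̂^μ`, where `F̂^μ` is the Kantorovich extension of `μ`. -/
theorem laxext_le_kantorovich {V : Type u} [CommMonoid V] [CompleteLattice V] [IsQuantale V]
    {F : Type u → Type u} [Functor F] [LawfulFunctor F]
    (E : LaxExt V F) {κ : Type u} (μ : PredLift V F κ) (hμ : μ.InducedBy E) :
    ∀ (X Y : Type u) (r : VRel V X Y), E.ext r ≤ μ.kant r := by
  obtain ⟨rr, hrr⟩ := hμ
  intro X Y r a b
  simp only [PredLift.kant, kant, vlift, iInf_apply]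
  refine le_iInf fun g => le_iInf fun z => le_sSup ?_
  show (μ.app g) b z * E.ext r a b ≤ (μ.app (vcomp g r)) a z
  rw [hrr, hrr]
  show (⨆ c, E.ext g b c * rr c z) * E.ext r a b ≤ ⨆ c, E.ext (vcomp g r) a c * rr c z
  rw [Quantale.iSup_mul_distrib]
  refine iSup_le fun c => ?_
  have h1 : E.ext r a b * E.ext g b c ≤ E.ext (vcomp g r) a c :=
    le_trans (le_iSup (fun y => E.ext r a y * E.ext g y c) b) (E.lax_comp r g a c)
  calc E.ext g b c * rr c z * E.ext r a b
      = (E.ext r a b * E.ext g b c) * rr c z := by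
        rw [mul_comm (E.ext r a b), mul_right_comm]
    _ ≤ E.ext (vcomp g r) a c * rr c z := mul_le_mul_left h1 _
    _ ≤ ⨆ c, E.ext (vcomp g r) a c * rr c z :=
        le_iSup (fun c => E.ext (vcomp g r) a c * rr c z) c
end

section
/- Let V be a commutative unital quantale, F̂ a lax extension of F : Set → Set, κ a cardinal, i : Y → κ a function, 𝔶 ∈ FY, and 𝔨 = Fi(𝔶). Then for all V-relations r : X ⇸ Y and s : Z ⇸ κ: (1) μ^𝔨(s) = (𝔶_∘)° · F̂((i_∘)° · s); and if i is injective, (2a) μ^𝔨(i_∘ · r) = (𝔶_∘)° · F̂r, and (2b) μ^𝔨(i_∘) ⊸ μ^𝔨(i_∘ · r) ≤ (𝔶_∘)° ⊸ ((𝔶_∘)° · F̂r). -/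
/-!
Common framework: commutative unital quantales, `V`-relations, lax extensions,
predicate liftings, Moss liftings and the Kantorovich extension.
-/

universe u

namespace MossAux

open Paper

variable {V : Type u} [CommMonoid V] [CompleteLattice V] [IsQuantale V]

lemma le_qhom_iff {u v w : V} : v ≤ qhom u w ↔ u * v ≤ w :=
  (Quantale.rightMulResiduation_le_iff_mul_le).symm.symm

lemma qhom_anti {u u' w : V} (h : u' ≤ u) : qhom u w ≤ qhom u' w := by
  rw [le_qhom_iff]
  calc u' * qhom u w ≤ u * qhom u w := mul_le_mul_left h _
    _ ≤ w := le_qhom_iff.mp le_rfl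

lemma mul_bot' (a : V) : a * (⊥ : V) = ⊥ := by
  rw [← sSup_empty, mul_sSup_distrib]; simp

lemma mul_iSup' {ι : Sort*} (a : V) (f : ι → V) : a * ⨆ i, f i = ⨆ i, a * f i := by
  rw [iSup, IsQuantale.mul_sSup_distrib, iSup_range]

/-- `(i° · s)(z, y) = s z (i y)`. -/
lemma vcomp_conv_graph {Z Y κ : Type u} (i : Y → κ) (s : VRel V Z κ) :
    vcomp (vconv (graph i)) s = fun z y => s z (i y) := by
  funext z yy
  simp only [vcomp, vconv, graph, mul_iSup', mul_one]
  exact iSup_iSup_eq_right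

/-- Composition with the converse of a point picks out the value at that point. -/
lemma vcomp_conv_point {A B : Type u} (k : B) (t : VRel V A B) :
    vcomp (vconv (graph (fun _ : PUnit => k))) t = fun a _ => t a k := by
  funext a u
  simp only [vcomp, vconv, graph, mul_iSup', mul_one]
  exact iSup_iSup_eq_right

/-- Key computation: `F̂((i°)·s) (a, 𝔶) = F̂s (a, Fi 𝔶)`. -/
lemma ext_comp_conv_graph {F : Type u → Type u} [Functor F] (E : LaxExt V F)
    {Z Y κ : Type u} (i : Y → κ) (s : VRel V Z κ) (a : F Z) (yy : F Y) :
    E.ext (vcomp (vconv (graph i)) s) a yy = E.ext s a (Functor.map i yy) := by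
  apply le_antisymm
  · -- use `i_∘ · (i° · s) ≤ s`
    have h1 : vcomp (graph i) (vcomp (vconv (graph i)) s) ≤ s := by
      intro z c
      rw [vcomp_conv_graph]
      simp only [vcomp, graph]
      refine iSup_le fun y' => ?_
      rcases eq_or_ne (i y') c with h | h
      · rw [iSup_pos h, mul_one, ← h]
      · rw [iSup_neg h, mul_bot']; exact bot_le
    have h2 : vcomp (E.ext (graph i)) (E.ext (vcomp (vconv (graph i)) s)) ≤ E.ext s :=
      le_trans (E.lax_comp _ (graph i)) (E.mono h1)
    refine le_trans ?_ (h2 a (Functor.map i yy))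
    refine le_trans ?_ (le_iSup _ yy)
    have hone : (1 : V) ≤ E.ext (graph i) yy (Functor.map i yy) := by
      refine le_trans ?_ (E.map_le i yy (Functor.map i yy))
      simp [graph]
    calc E.ext (vcomp (vconv (graph i)) s) a yy
        = E.ext (vcomp (vconv (graph i)) s) a yy * 1 := (mul_one _).symm
      _ ≤ _ := mul_le_mul_right hone _
  · -- use laxity with `i°` on the other side
    refine le_trans ?_ (E.lax_comp s (vconv (graph i)) a yy)
    refine le_trans ?_ (le_iSup _ (Functor.map i yy))
    have hone : (1 : V) ≤ E.ext (vconv (graph i)) (Functor.map i yy) yy := by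
      refine le_trans ?_ (E.map_conv_le i (Functor.map i yy) yy)
      simp [vconv, graph]
    calc E.ext s a (Functor.map i yy)
        = E.ext s a (Functor.map i yy) * 1 := (mul_one _).symm
      _ ≤ _ := mul_le_mul_right hone _

/-- Part (1) of the statement. -/
lemma moss_part1 {F : Type u → Type u} [Functor F] (E : LaxExt V F)
    {κ Y : Type u} (i : Y → κ) (y : F Y) (Z : Type u) (s : VRel V Z κ) :
    mossApp E (Functor.map i y) Z s =
      vcomp (vconv (graph (fun _ : PUnit => y))) (E.ext (vcomp (vconv (graph i)) s)) := by
  unfold mossApp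
  rw [vcomp_conv_point, vcomp_conv_point]
  funext a u
  exact (ext_comp_conv_graph E i s a y).symm

/-- For injective `i`, `i° · (i_∘ · r) = r`. -/
lemma conv_comp_graph_comp {X Y κ : Type u} {i : Y → κ} (hinj : Function.Injective i)
    (r : VRel V X Y) :
    vcomp (vconv (graph i)) (vcomp (graph i) r) = r := by
  rw [vcomp_conv_graph]
  funext x yy
  simp only [vcomp, graph]
  apply le_antisymm
  · refine iSup_le fun y' => ?_
    rcases eq_or_ne (i y') (i yy) with h | h
    · have := hinj h; subst this; rw [iSup_pos h, mul_one]
    · rw [iSup_neg h, mul_bot']; exact bot_le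
  · refine le_trans ?_ (le_iSup _ yy)
    rw [iSup_pos rfl, mul_one]

/-- `vlift` is antitone in its first argument. -/
lemma vlift_anti {X Y Z : Type u} {s s' : VRel V Y Z} (r : VRel V X Z) (h : s' ≤ s) :
    vlift s r ≤ vlift s' r :=
  fun _ yy => iInf_mono fun z => qhom_anti (h yy z)

end MossAux

open Paper in
/-- Computation rules for Moss liftings along a function
`i : Y → κ`, with `𝔨 = F i (𝔶)`. -/
theorem moss_lifting_along_function {V : Type u} [CommMonoid V] [CompleteLattice V]
    [IsQuantale V] {F : Type u → Type u} [Functor F] [LawfulFunctor F]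
    (E : LaxExt V F) {κ Y : Type u} (i : Y → κ) (y : F Y) :
    (∀ (Z : Type u) (s : VRel V Z κ),
        mossApp E (Functor.map i y) Z s =
          vcomp (vconv (graph (fun _ : PUnit => y))) (E.ext (vcomp (vconv (graph i)) s))) ∧
    (Function.Injective i →
      (∀ (X : Type u) (r : VRel V X Y),
          mossApp E (Functor.map i y) X (vcomp (graph i) r) =
            vcomp (vconv (graph (fun _ : PUnit => y))) (E.ext r)) ∧
      (∀ (X : Type u) (r : VRel V X Y),
          vlift (mossApp E (Functor.map i y) Y (graph i))
              (mossApp E (Functor.map i y) X (vcomp (graph i) r)) ≤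
            vlift (vconv (graph (fun _ : PUnit => y)))
              (vcomp (vconv (graph (fun _ : PUnit => y))) (E.ext r)))) := by
  have part1 := MossAux.moss_part1 E i y
  refine ⟨part1, fun hinj => ?_⟩
  have part2a : ∀ (X : Type u) (r : VRel V X Y),
      mossApp E (Functor.map i y) X (vcomp (graph i) r) =
        vcomp (vconv (graph (fun _ : PUnit => y))) (E.ext r) := by
    intro X r
    rw [part1 X (vcomp (graph i) r), MossAux.conv_comp_graph_comp hinj r]
  refine ⟨part2a, fun X r => ?_⟩
  rw [part2a X r]
  refine MossAux.vlift_anti _ ?_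
  intro b u
  simp only [part1 Y (graph i), MossAux.vcomp_conv_point]
  simp only [vconv, graph]
  refine iSup_le fun h => ?_
  subst h
  have hid : (graph (id : Y → Y) : VRel V Y Y) ≤ vcomp (vconv (graph i)) (graph i) := by
    rw [MossAux.vcomp_conv_graph]
    intro y1 y2
    simp only [graph, id]
    exact iSup_le fun h => le_iSup_of_le (by rw [h]) le_rfl
  refine le_trans ?_ (E.mono hid y y)
  refine le_trans ?_ (E.map_le (id : Y → Y) y y)
  simp only [graph]
  exact le_iSup_of_le (id_map y) le_rfl
end

section
/- Let V be a commutative unital quantale, F̂ a lax extension of F : Set → Set, i : λ → κ a function between cardinals, 𝔩 ∈ Fλ, and 𝔨 = Fi(𝔩). Then (1) F̂^{μ^𝔩} ≤ F̂^{μ^𝔨} (pointwise on all V-relations), and (2) if i is injective, then F̂^{μ^𝔩} = F̂^{μ^𝔨}. -/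
/-!
Common framework: commutative unital quantales, `V`-relations, lax extensions,
predicate liftings, Moss liftings and the Kantorovich extension.
-/

universe u

section Helpers
open Paper

set_option linter.unusedSectionVars false

variable {V : Type u} [CommMonoid V] [CompleteLattice V] [IsQuantale V]

lemma my_mul_bot (u : V) : u * (⊥:V) = ⊥ := by
  have := mul_sSup_distrib (x := u) (s := (∅ : Set V))
  simpa using this

lemma qhom_mono {u u' w w' : V} (hu : u' ≤ u) (hw : w ≤ w') : qhom u w ≤ qhom u' w' := by
  apply sSup_le_sSup
  intro v hv
  exact le_trans (mul_le_mul' hu le_rfl) (le_trans hv hw)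

lemma iSup_mul_eq {κ : Type u} (a : κ → V) (k : κ) :
    (⨆ b, a b * ⨆ _ : k = b, (1:V)) = a k := by
  apply le_antisymm
  · refine iSup_le fun b => ?_
    by_cases h : k = b
    · subst h; simp
    · simp [h, my_mul_bot]
  · refine le_trans ?_ (le_iSup _ k)
    simp

variable {F : Type u → Type u} [Functor F] [LawfulFunctor F]

lemma mossApp_eq (E : LaxExt V F) {κ X : Type u} (k : F κ) (f : VRel V X κ)
    (a : F X) (z : PUnit) : mossApp E k X f a z = E.ext f a k := by
  show (⨆ b, E.ext f a b * ⨆ _ : k = b, (1:V)) = _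
  exact iSup_mul_eq _ _

variable (E : LaxExt V F) {lam kap : Type u} (i : lam → kap) (l : F lam)

lemma lemA {Y : Type u} (h : VRel V Y lam) (y : F Y) :
    E.ext h y l ≤ E.ext (vcomp (graph i) h) y (Functor.map i l) := by
  calc E.ext h y l = E.ext h y l * 1 := (mul_one _).symm
    _ ≤ E.ext h y l * E.ext (graph i) l (Functor.map i l) := by
        apply mul_le_mul_right
        refine le_trans ?_ (E.map_le i l (Functor.map i l))
        simp [graph]
    _ ≤ ⨆ b, E.ext h y b * E.ext (graph i) b (Functor.map i l) :=
        le_iSup (fun b => E.ext h y b * E.ext (graph i) b (Functor.map i l)) l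
    _ ≤ E.ext (vcomp (graph i) h) y (Functor.map i l) := E.lax_comp h (graph i) y _

lemma lemB {Y : Type u} (h : VRel V Y kap) (y : F Y) :
    E.ext h y (Functor.map i l) ≤ E.ext (vcomp (vconv (graph i)) h) y l := by
  calc E.ext h y (Functor.map i l) = E.ext h y (Functor.map i l) * 1 := (mul_one _).symm
    _ ≤ E.ext h y (Functor.map i l) * E.ext (vconv (graph i)) (Functor.map i l) l := by
        apply mul_le_mul_right
        refine le_trans ?_ (E.map_conv_le i (Functor.map i l) l)
        simp [vconv, graph]
    _ ≤ ⨆ b, E.ext h y b * E.ext (vconv (graph i)) b l :=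
        le_iSup (fun b => E.ext h y b * E.ext (vconv (graph i)) b l) (Functor.map i l)
    _ ≤ E.ext (vcomp (vconv (graph i)) h) y l := E.lax_comp h (vconv (graph i)) y _

lemma vcomp_assoc' {W X Y Z : Type u} (t : VRel V Y Z) (s : VRel V X Y) (r : VRel V W X) :
    vcomp t (vcomp s r) = vcomp (vcomp t s) r := by
  funext w z
  show (⨆ y, (⨆ x, r w x * s x y) * t y z) = ⨆ x, r w x * ⨆ y, s x y * t y z
  simp only [Quantale.iSup_mul_distrib, Quantale.mul_iSup_distrib, mul_assoc]
  exact iSup_comm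

lemma vcomp_mono' {X Y Z : Type u} {s s' : VRel V Y Z} {r r' : VRel V X Y}
    (hs : s ≤ s') (hr : r ≤ r') : vcomp s r ≤ vcomp s' r' :=
  fun x z => iSup_mono fun y => mul_le_mul' (hr x y) (hs y z)

lemma vcomp_conv_graph {Y : Type u} (h : VRel V Y kap) :
    vcomp (vconv (graph i)) h = fun y j => h y (i j) := by
  funext y j
  show (⨆ c, h y c * ⨆ _ : i j = c, (1:V)) = h y (i j)
  exact iSup_mul_eq _ _

lemma graph_comp_conv_le {Y : Type u} (g : VRel V Y kap) :
    vcomp (graph i) (vcomp (vconv (graph i)) g) ≤ g := by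
  rw [vcomp_conv_graph]
  intro y c
  refine iSup_le fun j => ?_
  by_cases h : i j = c
  · subst h; simp [graph]
  · simp [graph, h, my_mul_bot]

lemma conv_comp_graph_eq (hi : Function.Injective i) {Y : Type u} (f : VRel V Y lam) :
    vcomp (vconv (graph i)) (vcomp (graph i) f) = f := by
  rw [vcomp_conv_graph]
  funext y j
  show (⨆ j', f y j' * ⨆ _ : i j' = i j, (1:V)) = f y j
  apply le_antisymm
  · refine iSup_le fun j' => ?_
    by_cases h : i j' = i j
    · rw [hi h]; simp
    · simp [h, my_mul_bot]
  · refine le_trans ?_ (le_iSup _ j); simp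

lemma kant_le {X Y : Type u} (r : VRel V X Y) :
    kant (mossApp E l) r ≤ kant (mossApp E (Functor.map i l)) r := by
  intro xh yh
  simp only [kant, Paper.vlift, iInf_apply, mossApp_eq]
  refine le_iInf fun g => le_iInf fun z => ?_
  refine le_trans (iInf_le _ (vcomp (vconv (graph i)) g)) ?_
  refine le_trans (iInf_le _ z) ?_
  apply qhom_mono
  · exact lemB E i l g yh
  · refine le_trans (lemA E i l _ xh) ?_
    refine E.mono ?_ xh _
    rw [vcomp_assoc']
    exact vcomp_mono' (graph_comp_conv_le i g) le_rfl

lemma kant_ge (hi : Function.Injective i) {X Y : Type u} (r : VRel V X Y) :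
    kant (mossApp E (Functor.map i l)) r ≤ kant (mossApp E l) r := by
  intro xh yh
  simp only [kant, Paper.vlift, iInf_apply, mossApp_eq]
  refine le_iInf fun f => le_iInf fun z => ?_
  refine le_trans (iInf_le _ (vcomp (graph i) f)) ?_
  refine le_trans (iInf_le _ z) ?_
  apply qhom_mono
  · exact lemA E i l f yh
  · refine le_trans (lemB E i l _ xh) ?_
    rw [vcomp_assoc', conv_comp_graph_eq i hi]

end Helpers

open Paper in
/-- For `i : λ → κ`, `𝔩 ∈ Fλ` and `𝔨 = F i (𝔩)`, the
Kantorovich extensions of the Moss liftings satisfy `F̂^{μ^𝔩} ≤ F̂^{μ^𝔨}`,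
with equality if `i` is injective. -/
theorem kantorovich_moss_monotone_in_arity {V : Type u} [CommMonoid V] [CompleteLattice V]
    [IsQuantale V] {F : Type u → Type u} [Functor F] [LawfulFunctor F]
    (E : LaxExt V F) {lam kap : Type u} (i : lam → kap) (l : F lam) :
    (∀ (X Y : Type u) (r : VRel V X Y),
        kant (mossApp E l) r ≤ kant (mossApp E (Functor.map i l)) r) ∧
    (Function.Injective i → ∀ (X Y : Type u) (r : VRel V X Y),
        kant (mossApp E l) r = kant (mossApp E (Functor.map i l)) r) := by
  constructor
  · intro X Y r
    exact kant_le E i l r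
  · intro hi X Y r
    exact le_antisymm (kant_le E i l r) (kant_ge E i l hi r)
end

section
/- Let V be a commutative unital quantale, F̂ a lax extension of F : Set → Set, κ a cardinal, and Y a set with |Y| ≤ κ. Let M = { μ^𝔨 | 𝔨 ∈ Fκ } be the set of κ-ary Moss liftings of F̂ determined by elements of Fκ. Then for every V-relation r : X ⇸ Y, F̂r = F̂^M r. -/
/-!
Common framework: commutative unital quantales, `V`-relations, lax extensions,
predicate liftings, Moss liftings and the Kantorovich extension.
-/

universe u

/-!
By lax composition, `F̂r(a, b) ⊗ F̂g(b, 𝔨) ≤ F̂(g · r)(a, 𝔨)`, i.e.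
`F̂r ≤ μ^𝔨(g) ⊸ μ^𝔨(g · r)` for every test relation `g` and every `𝔨`.
Conversely, fix an injection `j : Y → κ` and test with `g = j_∘` and `𝔨 = Fj(b)`.
As `(Fj)_∘ ≤ F̂(j_∘)`, the value `μ^𝔨(j_∘)(b)` is at least the unit, so the Kantorovich
value at `(a, b)` is at most `F̂(j_∘ · r)(a, Fj(b))`. Composing with
`((Fj)_∘)° ≤ F̂((j_∘)°)` bounds this by `F̂((j_∘)° · j_∘ · r)(a, b) ≤ F̂r(a, b)`,
since `(j_∘)° · j_∘ ≤ 1` for injective `j`.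
-/

namespace Paper

theorem graph_apply_self {V : Type u} [CommMonoid V] [CompleteLattice V] {X Y : Type u}
    (f : X → Y) (x : X) : graph (V := V) f x (f x) = 1 :=
  iSup_pos rfl

section Quantale

variable {V : Type u} [CommMonoid V] [CompleteLattice V] [IsQuantale V]

theorem le_qhom_iff {u v w : V} : v ≤ qhom u w ↔ u * v ≤ w :=
  Quantale.rightMulResiduation_le_iff_mul_le

theorem qhom_le_of_one_le {u w : V} (h : 1 ≤ u) : qhom u w ≤ w :=
  calc qhom u w = 1 * qhom u w := (one_mul _).symm
    _ ≤ u * qhom u w := mul_le_mul_left h _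
    _ ≤ w := le_qhom_iff.mp le_rfl

theorem mul_graph_apply {X Y : Type u} (v : V) (f : X → Y) (x : X) (y : Y) :
    v * graph f x y = ⨆ _ : f x = y, v := by
  by_cases h : f x = y <;> simp [graph, h]

theorem vcomp_conv_graph_vcomp_graph_le {X Y κ : Type u} {j : Y → κ}
    (hj : Function.Injective j) (r : VRel V X Y) :
    vcomp (vconv (graph j)) (vcomp (graph j) r) ≤ r := fun x y => by
  simp only [vcomp, vconv, mul_graph_apply, iSup_le_iff]
  intro c hc y' hy
  rw [hj (hy.trans hc.symm)]

end Quantale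

section LaxExt

variable {V : Type u} [CommMonoid V] [CompleteLattice V] [IsQuantale V]
  {F : Type u → Type u} [Functor F] (E : LaxExt V F)

theorem mossApp_apply {κ : Type u} (k : F κ) (X : Type u) (f : VRel V X κ) (a : F X)
    (u : PUnit) : mossApp E k X f a u = E.ext f a k := by
  simp only [mossApp, vcomp, vconv, mul_graph_apply, iSup_iSup_eq_right]

omit [IsQuantale V] in
theorem LaxExt.mul_le_ext_vcomp {X Y Z : Type u} (r : VRel V X Y) (s : VRel V Y Z)
    (a : F X) (b : F Y) (c : F Z) : E.ext r a b * E.ext s b c ≤ E.ext (vcomp s r) a c :=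
  (le_iSup (fun b => E.ext r a b * E.ext s b c) b).trans (E.lax_comp r s a c)

theorem LaxExt.le_kant_mossApp {κ X Y : Type u} (r : VRel V X Y) (k : F κ) :
    E.ext r ≤ kant (mossApp E k) r := fun a b => by
  simp only [kant, iInf_apply, vlift, le_iInf_iff, mossApp_apply, le_qhom_iff]
  intro g _
  rw [mul_comm]
  exact E.mul_le_ext_vcomp r g a b k

theorem LaxExt.kant_mossApp_map_le {κ X Y : Type u} (j : Y → κ) (r : VRel V X Y) (a : F X)
    (b : F Y) : kant (mossApp E (j <$> b)) r a b ≤ E.ext (vcomp (graph j) r) a (j <$> b) := by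
  simp only [kant, iInf_apply, vlift]
  refine (iInf_le _ (graph j)).trans ((iInf_le _ PUnit.unit).trans ?_)
  rw [mossApp_apply, mossApp_apply]
  refine qhom_le_of_one_le ?_
  simpa only [graph_apply_self] using E.map_le j b (j <$> b)

theorem LaxExt.ext_vcomp_graph_le {X Y κ : Type u} {j : Y → κ}
    (hj : Function.Injective j) (r : VRel V X Y) (a : F X) (b : F Y) :
    E.ext (vcomp (graph j) r) a (j <$> b) ≤ E.ext r a b := by
  have hconv : 1 ≤ E.ext (vconv (graph j)) (j <$> b) b := by
    simpa only [vconv, graph_apply_self] using E.map_conv_le j (j <$> b) b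
  calc E.ext (vcomp (graph j) r) a (j <$> b)
      ≤ E.ext (vcomp (graph j) r) a (j <$> b) * E.ext (vconv (graph j)) (j <$> b) b :=
        le_mul_of_one_le_right' hconv
    _ ≤ E.ext (vcomp (vconv (graph j)) (vcomp (graph j) r)) a b := E.mul_le_ext_vcomp _ _ _ _ _
    _ ≤ E.ext r a b := E.mono (vcomp_conv_graph_vcomp_graph_le hj r) a b

end LaxExt

end Paper

open Paper in
theorem laxext_eq_kantorovich_on_small_codomain_general {V : Type u} [CommMonoid V] [CompleteLattice V]
    [IsQuantale V] {F : Type u → Type u} [Functor F]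
    (E : LaxExt V F) {κ Y : Type u} (j : Y → κ) (hj : Function.Injective j)
    (X : Type u) (r : VRel V X Y) :
    E.ext r = ⨅ k : F κ, kant (mossApp E k) r := by
  refine le_antisymm (le_iInf fun k => E.le_kant_mossApp r k) fun a b => ?_
  calc (⨅ k : F κ, kant (mossApp E k) r) a b ≤ kant (mossApp E (j <$> b)) r a b :=
        iInf_le (fun k => kant (mossApp E k) r) (j <$> b) a b
    _ ≤ E.ext (vcomp (graph j) r) a (j <$> b) := E.kant_mossApp_map_le j r a b
    _ ≤ E.ext r a b := E.ext_vcomp_graph_le hj r a b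

open Paper in
/-- If `|Y| ≤ κ`, then on `V`-relations `r : X ⇸ Y` a lax
extension `F̂` agrees with the Kantorovich extension of the set
`M = { μ^𝔨 ∣ 𝔨 ∈ Fκ }` of `κ`-ary Moss liftings. -/
theorem laxext_eq_kantorovich_on_small_codomain {V : Type u} [CommMonoid V] [CompleteLattice V]
    [IsQuantale V] {F : Type u → Type u} [Functor F] [LawfulFunctor F]
    (E : LaxExt V F) {κ Y : Type u} (j : Y → κ) (hj : Function.Injective j)
    (X : Type u) (r : VRel V X Y) :
    E.ext r = ⨅ k : F κ, kant (mossApp E k) r :=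
  laxext_eq_kantorovich_on_small_codomain_general E j hj X r
end
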